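/- arXiv:1811.10139 — 3 statements merged into one kernel-verified Lean document; each statement's English description precedes it below -/
import Mathlib

section
/- If x = [a_1,...,a_{n-1}] is a rational number in (0,1) with a_1+...+a_{n-1} = s+1 > 2, and ?(x) = [b_1,...,b_k], then b_1+...+b_k > s+1. Equivalently, letting S(x) denote the sum of partial quotients of a rational x in (0,1), one has S(?(x)) > S(x) for all rational x in (0,1) other than 1/2. -/
open scoped Classical

/-- The Gauss map `x ↦ {1/x}`. -/
noncomputable def gaussMap (x : ℝ) : ℝ := Int.fract x⁻¹

/-- `cfDigit x n` is the `(n+1)`-st partial quotient `a_{n+1}` of the continued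
fraction expansion `x = [a_1, a_2, …]` of `x ∈ (0,1)`. -/
noncomputable def cfDigit (x : ℝ) (n : ℕ) : ℤ := ⌊(gaussMap^[n] x)⁻¹⌋

/-- The Minkowski question mark function, via the Denjoy–Salem series
`?(x) = ∑_{k≥1} (-1)^{k+1} / 2^{a_1+⋯+a_k-1}` (a finite sum for rational `x`). -/
noncomputable def minkowskiQ (x : ℝ) : ℝ :=
  ∑' k : ℕ, if ∀ i ≤ k, 0 < cfDigit x i then
      (-1 : ℝ) ^ k / (2 : ℝ) ^ ((∑ i ∈ Finset.range (k + 1), cfDigit x i) - 1)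
    else 0

/-- The sum of the partial quotients of (the canonical continued fraction
expansion of) a rational number in . -/
noncomputable def cfSum (x : ℝ) : ℤ := ∑' k : ℕ, cfDigit x k

namespace SPQ

def gq (x : ℚ) : ℚ := Int.fract x⁻¹
def dq (x : ℚ) : ℤ := ⌊x⁻¹⌋

lemma gq_zero : gq 0 = 0 := by simp [gq]
lemma dq_zero : dq 0 = 0 := by simp [dq]
lemma gq_nonneg (x : ℚ) : 0 ≤ gq x := Int.fract_nonneg _
lemma gq_lt_one (x : ℚ) : gq x < 1 := Int.fract_lt_one _

lemma gaussMap_cast (x : ℚ) : gaussMap (x : ℝ) = ((gq x : ℚ) : ℝ) := by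
  unfold gaussMap gq
  rw [← Rat.cast_inv]
  unfold Int.fract
  rw [Rat.floor_cast]
  push_cast
  ring

lemma iter_cast (x : ℚ) (n : ℕ) : gaussMap^[n] (x : ℝ) = ((gq^[n] x : ℚ) : ℝ) := by
  induction n with
  | zero => simp
  | succ n ih =>
    rw [Function.iterate_succ_apply', Function.iterate_succ_apply', ih, gaussMap_cast]

lemma cfDigit_cast (x : ℚ) (n : ℕ) : cfDigit (x : ℝ) n = dq (gq^[n] x) := by
  unfold cfDigit dq
  rw [iter_cast, ← Rat.cast_inv, Rat.floor_cast]

lemma dq_pos {x : ℚ} (h0 : 0 < x) (h1 : x < 1) : 1 ≤ dq x := by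
  have : (1:ℚ) ≤ x⁻¹ := one_le_inv_iff₀.2 ⟨h0, le_of_lt h1⟩
  exact_mod_cast Int.le_floor.2 (by exact_mod_cast this)

lemma num_pos {x : ℚ} (h0 : 0 < x) : 0 < x.num := Rat.num_pos.2 h0

lemma num_lt_den {x : ℚ} (h0 : 0 < x) (h1 : x < 1) : x.num < (x.den : ℤ) :=
  Rat.num_lt_denom_iff.2 h1

lemma inv_eq {x : ℚ} (h0 : 0 < x) : x⁻¹ = (x.den : ℚ) / (x.num : ℚ) := by
  conv_lhs => rw [← Rat.num_div_den x]
  rw [inv_div]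

lemma dq_eq {x : ℚ} (h0 : 0 < x) : dq x = (x.den : ℤ) / x.num := by
  unfold dq
  rw [inv_eq h0]
  have h : x.num = ((x.num.toNat : ℕ) : ℤ) := (Int.toNat_of_nonneg (le_of_lt (num_pos h0))).symm
  rw [show ((x.num : ℚ)) = ((x.num.toNat : ℕ) : ℚ) by rw [h]; push_cast; rw [← h]]
  rw [show ((x.den : ℚ)) = (((x.den : ℤ)) : ℚ) by push_cast; ring]
  rw [Rat.floor_intCast_div_natCast]
  rw [← h]

lemma gq_eq {x : ℚ} (h0 : 0 < x) : gq x = (((x.den : ℤ) % x.num : ℤ) : ℚ) / (x.num : ℚ) := by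
  unfold gq Int.fract
  show x⁻¹ - (⌊x⁻¹⌋ : ℚ) = _
  rw [show (⌊x⁻¹⌋ : ℤ) = dq x from rfl, dq_eq h0, inv_eq h0]
  have hn : (x.num : ℚ) ≠ 0 := by exact_mod_cast (num_pos h0).ne'
  rw [Int.emod_def]
  push_cast
  field_simp

lemma gq_num_den {x : ℚ} (h0 : 0 < x) (h1 : x < 1) :
    (gq x).num = (x.den : ℤ) % x.num ∧ ((gq x).den : ℤ) = x.num := by
  have hnum := num_pos h0
  have hcop : Nat.Coprime ((x.den : ℤ) % x.num).natAbs x.num.natAbs := by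
    have h1' : x.num = (x.num.natAbs : ℤ) := (Int.natAbs_of_nonneg hnum.le).symm
    have h2 : ((x.den : ℤ) % x.num).natAbs = x.den % x.num.natAbs := by
      rw [h1', Int.natAbs_natCast]
      omega
    rw [h2, show x.num.natAbs = x.num.natAbs from rfl]
    have := x.reduced
    have hg : Nat.gcd x.num.natAbs x.den = 1 := this
    calc Nat.gcd (x.den % x.num.natAbs) x.num.natAbs
        = Nat.gcd x.num.natAbs x.den := (Nat.gcd_rec x.num.natAbs x.den).symm
      _ = 1 := hg
  have key := gq_eq h0
  constructor
  · rw [key]; exact Rat.num_div_eq_of_coprime hnum hcop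
  · rw [key]
    have := Rat.den_div_eq_of_coprime hnum hcop
    omega

/-- The continuant relation: den x = a₁ · den (gq x) + num (gq x). -/
lemma rel {x : ℚ} (h0 : 0 < x) (h1 : x < 1) :
    (x.den : ℤ) = dq x * ((gq x).den : ℤ) + (gq x).num := by
  obtain ⟨hn, hd⟩ := gq_num_den h0 h1
  rw [hn, hd, dq_eq h0]
  have := Int.mul_ediv_add_emod (x.den : ℤ) x.num
  linarith [this]

lemma gq_den_lt {x : ℚ} (h0 : 0 < x) (h1 : x < 1) : (gq x).den < x.den := by
  have hd := (gq_num_den h0 h1).2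
  have := num_lt_den h0 h1
  omega

lemma iter_zero (n : ℕ) : gq^[n] 0 = 0 := by
  induction n with
  | zero => rfl
  | succ n ih => rw [Function.iterate_succ_apply', ih, gq_zero]

lemma iter_absorb {x : ℚ} {m n : ℕ} (h : gq^[m] x = 0) (hmn : m ≤ n) : gq^[n] x = 0 := by
  have : gq^[n] x = gq^[n - m] (gq^[m] x) := by
    rw [← Function.iterate_add_apply]
    congr 1
    omega
  rw [this, h, iter_zero]

lemma exists_iter_zero : ∀ fuel : ℕ, ∀ x : ℚ, x.den ≤ fuel → 0 ≤ x → x < 1 →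
    ∃ n, gq^[n] x = 0 := by
  intro fuel
  induction fuel with
  | zero => intro x hden _ _; have := x.pos; omega
  | succ fuel ih =>
    intro x hden hx0 hx1
    rcases eq_or_lt_of_le hx0 with h | h
    · exact ⟨0, h.symm⟩
    · have hlt := gq_den_lt h hx1
      obtain ⟨n, hn⟩ := ih (gq x) (by omega) (gq_nonneg x) (gq_lt_one x)
      exact ⟨n + 1, by rwa [Function.iterate_succ_apply]⟩

noncomputable def nsteps (x : ℚ) : ℕ :=
  if h : ∃ n, gq^[n] x = 0 then Nat.find h else 0

lemma nsteps_eq {x : ℚ} {n : ℕ} (hn : gq^[n] x = 0) (hlt : ∀ j < n, gq^[j] x ≠ 0) :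
    nsteps x = n := by
  rw [nsteps, dif_pos ⟨n, hn⟩]
  have h1 := Nat.find_min' (⟨n, hn⟩ : ∃ n, gq^[n] x = 0) hn
  rcases lt_or_ge (Nat.find (⟨n, hn⟩ : ∃ n, gq^[n] x = 0)) n with h | h
  · exact absurd (Nat.find_spec (⟨n, hn⟩ : ∃ n, gq^[n] x = 0)) (hlt _ h)
  · omega

lemma nsteps_zero : nsteps 0 = 0 := nsteps_eq (x := 0) (n := 0) (by simp) (by omega)

lemma iter_nsteps {x : ℚ} (h0 : 0 ≤ x) (h1 : x < 1) : gq^[nsteps x] x = 0 := by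
  obtain ⟨n, hn⟩ := exists_iter_zero x.den x le_rfl h0 h1
  rw [nsteps, dif_pos ⟨n, hn⟩]
  exact Nat.find_spec (⟨n, hn⟩ : ∃ n, gq^[n] x = 0)

lemma iter_ne_zero {x : ℚ} {j : ℕ} (hj : j < nsteps x) : gq^[j] x ≠ 0 := by
  rw [nsteps] at hj
  split at hj
  · exact Nat.find_min ‹_› hj
  · omega

lemma iter_mem {x : ℚ} (h0 : 0 < x) (h1 : x < 1) {i : ℕ} (hi : i < nsteps x) :
    0 < gq^[i] x ∧ gq^[i] x < 1 := by
  cases i with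
  | zero => exact ⟨h0, h1⟩
  | succ i =>
    rw [Function.iterate_succ_apply']
    refine ⟨lt_of_le_of_ne (gq_nonneg _) ?_, gq_lt_one _⟩
    intro h
    exact iter_ne_zero hi (by rw [Function.iterate_succ_apply']; exact h.symm)

lemma nsteps_pos {x : ℚ} (h0 : 0 < x) (h1 : x < 1) : 0 < nsteps x := by
  rcases Nat.eq_zero_or_pos (nsteps x) with h | h
  · have h2 := iter_nsteps h0.le h1
    rw [h] at h2
    simp at h2
    exact absurd h2 h0.ne'
  · exact h

lemma nsteps_succ {x : ℚ} (h0 : 0 < x) (h1 : x < 1) :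
    nsteps x = nsteps (gq x) + 1 := by
  obtain ⟨k, hk⟩ : ∃ k, nsteps x = k + 1 := ⟨nsteps x - 1, by have := nsteps_pos h0 h1; omega⟩
  have hit : gq^[k] (gq x) = 0 := by
    have h := iter_nsteps h0.le h1
    rw [hk, Function.iterate_succ_apply] at h
    exact h
  have hne : ∀ j < k, gq^[j] (gq x) ≠ 0 := by
    intro j hj
    rw [← Function.iterate_succ_apply]
    exact iter_ne_zero (by omega)
  rw [hk, nsteps_eq hit hne]

noncomputable def Sq (x : ℚ) : ℕ := ∑ i ∈ Finset.range (nsteps x), (dq (gq^[i] x)).toNat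

lemma Sq_zero : Sq 0 = 0 := by simp [Sq, nsteps_zero]

lemma Sq_rec {x : ℚ} (h0 : 0 < x) (h1 : x < 1) :
    Sq x = (dq x).toNat + Sq (gq x) := by
  rw [Sq, nsteps_succ h0 h1, Finset.sum_range_succ']
  simp only [Function.iterate_succ_apply, Function.iterate_zero_apply]
  rw [Sq]
  ring

lemma cfSum_eq {x : ℚ} (h0 : 0 ≤ x) (h1 : x < 1) :
    cfSum (x : ℝ) = ∑ i ∈ Finset.range (nsteps x), dq (gq^[i] x) := by
  rw [cfSum]
  rw [tsum_eq_sum (s := Finset.range (nsteps x)) ?_]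
  · exact Finset.sum_congr rfl fun i _ => cfDigit_cast x i
  · intro k hk
    rw [Finset.mem_range, not_lt] at hk
    rw [cfDigit_cast, iter_absorb (iter_nsteps h0 h1) hk, dq_zero]

lemma cfSum_eq_Sq {x : ℚ} (h0 : 0 < x) (h1 : x < 1) : cfSum (x : ℝ) = (Sq x : ℤ) := by
  rw [cfSum_eq h0.le h1, Sq]
  push_cast
  refine Finset.sum_congr rfl fun i hi => ?_
  rw [Finset.mem_range] at hi
  obtain ⟨hi0, hi1⟩ := iter_mem h0 h1 hi
  have := dq_pos hi0 hi1
  omega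

/-- The finite Denjoy–Salem sum. -/
noncomputable def A (x : ℚ) : ℝ :=
  ∑ k ∈ Finset.range (nsteps x),
    (-1 : ℝ) ^ k / (2 : ℝ) ^ ((∑ i ∈ Finset.range (k + 1), dq (gq^[i] x)) - 1)

lemma mink_eq {x : ℚ} (h0 : 0 < x) (h1 : x < 1) : minkowskiQ (x : ℝ) = A x := by
  rw [minkowskiQ, A]
  rw [tsum_eq_sum (s := Finset.range (nsteps x)) ?_]
  · refine Finset.sum_congr rfl fun k hk => ?_
    rw [Finset.mem_range] at hk
    rw [if_pos]
    · have hs : ∑ i ∈ Finset.range (k + 1), cfDigit (x : ℝ) i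
          = ∑ i ∈ Finset.range (k + 1), dq (gq^[i] x) :=
        Finset.sum_congr rfl fun i _ => cfDigit_cast x i
      rw [hs]
    · intro i hi
      rw [cfDigit_cast]
      obtain ⟨hi0, hi1⟩ := iter_mem h0 h1 (lt_of_le_of_lt hi hk)
      exact lt_of_lt_of_le one_pos (dq_pos hi0 hi1)
  · intro k hk
    rw [Finset.mem_range, not_lt] at hk
    rw [if_neg]
    intro hall
    have := hall (nsteps x) hk
    rw [cfDigit_cast, iter_nsteps h0.le h1, dq_zero] at this
    exact lt_irrefl 0 this

lemma A_rec {x : ℚ} (h0 : 0 < x) (h1 : x < 1) :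
    A x = (2 - A (gq x)) / (2 : ℝ) ^ (dq x) := by
  have h2 : (2 : ℝ) ≠ 0 := two_ne_zero
  have hd : (2 : ℝ) ^ (dq x) ≠ 0 := zpow_ne_zero _ h2
  rw [A, nsteps_succ h0 h1, Finset.sum_range_succ']
  have hf0 : (-1 : ℝ) ^ 0 / (2 : ℝ) ^ ((∑ i ∈ Finset.range (0 + 1), dq (gq^[i] x)) - 1)
      = 2 / (2 : ℝ) ^ (dq x) := by
    rw [Finset.sum_range_one]
    simp only [Function.iterate_zero_apply, pow_zero]
    rw [zpow_sub₀ h2, zpow_one, one_div_div]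
  have hsum : ∑ k ∈ Finset.range (nsteps (gq x)),
        (-1 : ℝ) ^ (k + 1) / (2 : ℝ) ^ ((∑ i ∈ Finset.range (k + 1 + 1), dq (gq^[i] x)) - 1)
      = (-1) / (2 : ℝ) ^ (dq x) * A (gq x) := by
    rw [A, Finset.mul_sum]
    refine Finset.sum_congr rfl fun k _ => ?_
    have hσ : ∑ i ∈ Finset.range (k + 1 + 1), dq (gq^[i] x)
        = dq x + ∑ i ∈ Finset.range (k + 1), dq (gq^[i] (gq x)) := by
      rw [Finset.sum_range_succ']
      simp only [Function.iterate_succ_apply, Function.iterate_zero_apply]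
      ring
    have hs : (2 : ℝ) ^ ((∑ i ∈ Finset.range (k + 1), dq (gq^[i] (gq x))) - 1) ≠ 0 :=
      zpow_ne_zero _ h2
    rw [hσ, show dq x + (∑ i ∈ Finset.range (k + 1), dq (gq^[i] (gq x))) - 1
        = dq x + ((∑ i ∈ Finset.range (k + 1), dq (gq^[i] (gq x))) - 1) by ring,
      zpow_add₀ h2, pow_succ]
    field_simp
  rw [hsum, hf0]
  field_simp
  ring

lemma terminal {x : ℚ} (h0 : 0 < x) (h1 : x < 1) (hg : gq x = 0) :
    x⁻¹ = (dq x : ℚ) ∧ 2 ≤ dq x := by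
  have he : x⁻¹ = (dq x : ℚ) := by
    have : x⁻¹ - (⌊x⁻¹⌋ : ℚ) = 0 := hg
    rw [show (⌊x⁻¹⌋ : ℤ) = dq x from rfl] at this
    linarith
  refine ⟨he, ?_⟩
  have hx : (1 : ℚ) < x⁻¹ := one_lt_inv_iff₀.2 ⟨h0, h1⟩
  rw [he] at hx
  exact_mod_cast hx

lemma two_lt_pow {s : ℕ} (hs : 1 ≤ s) : (1 : ℝ) < 2 ^ s := by
  calc (1 : ℝ) < 2 := one_lt_two
    _ = 2 ^ 1 := (pow_one 2).symm
    _ ≤ 2 ^ s := pow_le_pow_right₀ one_le_two hs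

lemma main : ∀ fuel : ℕ, ∀ x : ℚ, x.den ≤ fuel → 0 < x → x < 1 →
    ∃ (m : ℤ) (s : ℕ), Odd m ∧ 0 < m ∧ (m : ℝ) < 2 ^ s ∧ Sq x = s + 1 ∧
      A x = (m : ℝ) / 2 ^ s := by
  intro fuel
  induction fuel with
  | zero => intro x hden _ _; have := x.pos; omega
  | succ fuel ih =>
    intro x hden h0 h1
    have hd1 : 1 ≤ dq x := dq_pos h0 h1
    by_cases hg : gq x = 0
    · -- terminal step
      obtain ⟨-, hd2⟩ := terminal h0 h1 hg
      refine ⟨1, (dq x).toNat - 1, odd_one, one_pos, ?_, ?_, ?_⟩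
      · exact_mod_cast two_lt_pow (by omega)
      · rw [Sq_rec h0 h1, hg, Sq_zero]; omega
      · rw [A_rec h0 h1, hg]
        rw [A, nsteps_zero]
        simp only [Finset.range_zero, Finset.sum_empty, sub_zero]
        rw [show (dq x : ℤ) = (((dq x).toNat - 1 : ℕ) : ℤ) + 1 by omega]
        rw [zpow_add₀ (two_ne_zero) _ 1, zpow_natCast, zpow_one]
        push_cast
        field_simp
        ring_nf
        congr 1
        omega
    · -- recursive step
      have hx'0 : 0 < gq x := lt_of_le_of_ne (gq_nonneg x) (Ne.symm hg)
      have hx'1 : gq x < 1 := gq_lt_one x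
      have hlt := gq_den_lt h0 h1
      obtain ⟨m', s', hodd', hpos', hlt', hSq', hA'⟩ := ih (gq x) (by omega) hx'0 hx'1
      set d : ℕ := (dq x).toNat with hd
      have hd1' : 1 ≤ d := by omega
      refine ⟨2 ^ (s' + 1) - m', s' + d, ?_, ?_, ?_, ?_, ?_⟩
      · obtain ⟨k, hk⟩ := hodd'
        exact ⟨2 ^ s' - k - 1, by rw [hk]; ring⟩
      · have h1' : (m' : ℝ) < 2 ^ s' := hlt'
        have h2' : m' < (2 : ℤ) ^ s' := by exact_mod_cast h1'
        have h3' : (2 : ℤ) ^ (s' + 1) = 2 * 2 ^ s' := by ring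
        nlinarith [pow_pos (by norm_num : (0:ℤ) < 2) s']
      · push_cast
        have hmr : (0 : ℝ) < m' := by exact_mod_cast hpos'
        have : (2 : ℝ) ^ (s' + 1) ≤ 2 ^ (s' + d) := pow_le_pow_right₀ one_le_two (by omega)
        linarith
      · rw [Sq_rec h0 h1, hSq']; omega
      · rw [A_rec h0 h1, hA']
        have hdx : (2 : ℝ) ^ (dq x) = 2 ^ d := by
          rw [← zpow_natCast]
          congr 1
          omega
        rw [hdx]
        have e1 : (2 : ℝ) ^ s' ≠ 0 := by positivity
        have e2 : (2 : ℝ) ^ d ≠ 0 := by positivity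
        rw [pow_add]
        push_cast
        field_simp
        ring

lemma nat_le_fib : ∀ n : ℕ, n ≤ Nat.fib (n + 1) := by
  intro n
  induction n with
  | zero => simp
  | succ n ih =>
    have h2 : Nat.fib (n + 2) = Nat.fib n + Nat.fib (n + 1) := Nat.fib_add_two
    have h3 : n + 1 + 1 = n + 2 := by omega
    rw [h3]
    rcases Nat.eq_zero_or_pos n with h | h
    · subst h; simp
    · have := Nat.fib_pos.2 h
      omega

lemma FF : ∀ a : ℕ, 1 ≤ a → ∀ m : ℕ, 1 ≤ m →
    a * Nat.fib (m + 1) + Nat.fib m ≤ Nat.fib (m + a + 1) := by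
  intro a
  induction a with
  | zero => omega
  | succ a ih =>
    intro _ m hm
    rcases Nat.eq_zero_or_pos a with h | h
    · subst h
      have h2 : Nat.fib (m + 2) = Nat.fib m + Nat.fib (m + 1) := Nat.fib_add_two
      have h3 : m + 1 + 1 = m + 2 := by omega
      rw [h3, h2]
      omega
    · have ih' := ih h m hm
      have h2 : Nat.fib (m + a + 2) = Nat.fib (m + a) + Nat.fib (m + a + 1) := Nat.fib_add_two
      have h3 : Nat.fib (m + 1) ≤ Nat.fib (m + a) := Nat.fib_mono (by omega)
      have h4 : (a + 1) * Nat.fib (m + 1) = a * Nat.fib (m + 1) + Nat.fib (m + 1) := by ring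
      have h5 : m + (a + 1) + 1 = m + a + 2 := by omega
      rw [h5, h4, h2]
      linarith

lemma fibpow : ∀ n : ℕ, Nat.fib (n + 4) < 2 ^ (n + 2) ∧ Nat.fib (n + 5) < 2 ^ (n + 3) := by
  intro n
  induction n with
  | zero => decide
  | succ n ih =>
    obtain ⟨ih1, ih2⟩ := ih
    have h2 : Nat.fib (n + 6) = Nat.fib (n + 4) + Nat.fib (n + 5) := Nat.fib_add_two
    have e1 : n + 1 + 4 = n + 5 := by omega
    have e2 : n + 1 + 5 = n + 6 := by omega
    have e3 : n + 1 + 2 = n + 3 := by omega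
    have e4 : n + 1 + 3 = n + 4 := by omega
    have p1 : (2:ℕ) ^ (n + 4) = 2 ^ (n + 2) + 2 ^ (n + 2) + 2 ^ (n + 3) := by ring
    rw [e1, e2, e3, e4, h2, p1]
    have : (0:ℕ) < 2 ^ (n + 2) := by positivity
    omega

lemma Sq_ge_two : ∀ fuel : ℕ, ∀ x : ℚ, x.den ≤ fuel → 0 < x → x < 1 →
    2 ≤ Sq x ∧ (Sq x = 2 → x = 1 / 2) := by
  intro fuel
  induction fuel with
  | zero => intro x hden _ _; have := x.pos; omega
  | succ fuel ih =>
    intro x hden h0 h1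
    by_cases hg : gq x = 0
    · obtain ⟨he, hd2⟩ := terminal h0 h1 hg
      have hSq : Sq x = (dq x).toNat := by rw [Sq_rec h0 h1, hg, Sq_zero]; omega
      constructor
      · omega
      · intro h2
        have : dq x = 2 := by omega
        rw [this] at he
        rw [← inv_inv x, he]
        norm_num
    · have hx'0 : 0 < gq x := lt_of_le_of_ne (gq_nonneg x) (Ne.symm hg)
      have hlt := gq_den_lt h0 h1
      obtain ⟨h2, -⟩ := ih (gq x) (by omega) hx'0 (gq_lt_one x)
      have hd1 : 1 ≤ dq x := dq_pos h0 h1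
      have hSq : Sq x = (dq x).toNat + Sq (gq x) := Sq_rec h0 h1
      omega

lemma fib_bound : ∀ fuel : ℕ, ∀ y : ℚ, y.den ≤ fuel → 0 ≤ y → y < 1 →
    y.den ≤ Nat.fib (Sq y + 1) := by
  intro fuel
  induction fuel with
  | zero => intro y hden _ _; have := y.pos; omega
  | succ fuel ih =>
    intro y hden hy0 hy1
    rcases eq_or_lt_of_le hy0 with h | h0
    · rw [← h]
      simp [Sq_zero]
    have hd1 : 1 ≤ dq y := dq_pos h0 hy1
    have hrel := rel h0 hy1
    have hSq : Sq y = (dq y).toNat + Sq (gq y) := Sq_rec h0 hy1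
    have hlt := gq_den_lt h0 hy1
    by_cases hg : gq y = 0
    · rw [hg] at hrel
      simp at hrel
      have hden_eq : (y.den : ℤ) = dq y := by omega
      have : Sq y = (dq y).toNat := by rw [hSq, hg, Sq_zero]; omega
      rw [this]
      have := nat_le_fib (dq y).toNat
      omega
    · have hy'0 : 0 < gq y := lt_of_le_of_ne (gq_nonneg y) (Ne.symm hg)
      have hy'1 : gq y < 1 := gq_lt_one y
      have hrel2 : ((gq (gq y)).den : ℤ) = (gq y).num := (gq_num_den hy'0 hy'1).2
      have hkey : y.den = (dq y).toNat * (gq y).den + (gq (gq y)).den := by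
        have : (y.den : ℤ) = ((dq y).toNat : ℤ) * ((gq y).den : ℤ) + ((gq (gq y)).den : ℤ) := by
          rw [hrel, ← hrel2]
          congr 1
          congr 1
          omega
        exact_mod_cast this
      have hlt2 : (gq (gq y)).den < (gq y).den := gq_den_lt hy'0 hy'1
      have ih1 := ih (gq y) (by omega) (gq_nonneg y) (gq_lt_one y)
      have ih2 := ih (gq (gq y)) (by omega) (gq_nonneg _) (gq_lt_one _)
      have hSq' : Sq (gq y) = (dq (gq y)).toNat + Sq (gq (gq y)) := Sq_rec hy'0 hy'1
      have hd1' : 1 ≤ dq (gq y) := dq_pos hy'0 hy'1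
      have hS1 : 1 ≤ Sq (gq y) := by omega
      have hmono : Nat.fib (Sq (gq (gq y)) + 1) ≤ Nat.fib (Sq (gq y)) := Nat.fib_mono (by omega)
      have hFF := FF (dq y).toNat (by omega) (Sq (gq y)) hS1
      calc y.den = (dq y).toNat * (gq y).den + (gq (gq y)).den := hkey
        _ ≤ (dq y).toNat * Nat.fib (Sq (gq y) + 1) + Nat.fib (Sq (gq y)) := by
            have := Nat.mul_le_mul_left (dq y).toNat ih1
            have := le_trans ih2 hmono
            omega
        _ ≤ Nat.fib (Sq (gq y) + (dq y).toNat + 1) := hFF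
        _ = Nat.fib (Sq y + 1) := by rw [hSq]; congr 1; omega

end SPQ

open SPQ in
theorem sum_partial_quotients_increases :
    ∀ x : ℚ, (x : ℝ) ∈ Set.Ioo (0 : ℝ) 1 → x ≠ 1 / 2 →
      cfSum (minkowskiQ (x : ℝ)) > cfSum (x : ℝ) := by
  intro x hx hne
  have h0 : 0 < x := by exact_mod_cast hx.1
  have h1 : x < 1 := by exact_mod_cast hx.2
  obtain ⟨m, s, hodd, hpos, hlt, hSq, hA⟩ := main x.den x le_rfl h0 h1
  -- s ≥ 2
  obtain ⟨hge2, heq2⟩ := Sq_ge_two x.den x le_rfl h0 h1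
  have hs2 : 2 ≤ s := by
    rcases Nat.lt_or_ge s 2 with h | h
    · exfalso
      have : Sq x = 2 := by omega
      exact hne (heq2 this)
    · exact h
  -- the rational value of ?(x)
  have hb : (0 : ℤ) < 2 ^ s := by positivity
  have hcop : Nat.Coprime m.natAbs ((2 : ℤ) ^ s).natAbs := by
    have h1' : ((2 : ℤ) ^ s).natAbs = 2 ^ s := by
      rw [Int.natAbs_pow]
      rfl
    rw [h1']
    exact Nat.Coprime.pow_right s (Int.natAbs_odd.2 hodd).coprime_two_right
  set yq : ℚ := ((m : ℤ) : ℚ) / (((2 : ℤ) ^ s : ℤ) : ℚ) with hyq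
  have hden : (yq.den : ℤ) = 2 ^ s := Rat.den_div_eq_of_coprime hb hcop
  have hmlt : m < 2 ^ s := by exact_mod_cast hlt
  have hyq0 : 0 < yq := by
    rw [hyq]
    positivity
  have hyq1 : yq < 1 := by
    rw [hyq, div_lt_one (by positivity)]
    exact_mod_cast hmlt
  have hyqR : ((yq : ℚ) : ℝ) = (m : ℝ) / 2 ^ s := by
    rw [hyq]
    push_cast
    ring
  have hmq : minkowskiQ (x : ℝ) = ((yq : ℚ) : ℝ) := by
    rw [mink_eq h0 h1, hA, hyqR]
  -- sums
  have hcs1 : cfSum (x : ℝ) = (Sq x : ℤ) := cfSum_eq_Sq h0 h1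
  have hcs2 : cfSum (minkowskiQ (x : ℝ)) = (Sq yq : ℤ) := by
    rw [hmq]
    exact cfSum_eq_Sq hyq0 hyq1
  -- Fibonacci bound
  have hfib : yq.den ≤ Nat.fib (Sq yq + 1) := fib_bound yq.den yq le_rfl hyq0.le hyq1
  have hden' : yq.den = 2 ^ s := by exact_mod_cast hden
  have hkey : s + 2 ≤ Sq yq := by
    by_contra hcon
    push_neg at hcon
    obtain ⟨t, ht⟩ : ∃ t, s = t + 2 := ⟨s - 2, by omega⟩
    have hf : Nat.fib (s + 2) < 2 ^ s := by
      rw [ht]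
      have := (fibpow t).1
      have e : t + 2 + 2 = t + 4 := by omega
      rw [e]
      exact this
    have hmono : Nat.fib (Sq yq + 1) ≤ Nat.fib (s + 2) := Nat.fib_mono (by omega)
    rw [hden'] at hfib
    omega
  rw [hcs1, hcs2]
  have : Sq x < Sq yq := by omega
  exact_mod_cast this
end

section
/- The only rational fixed points of the Minkowski question mark function on [0,1] are 0, 1/2, and 1. -/
open scoped Classical

/-!
For `0 < x ≤ 1` the Denjoy–Salem series satisfies `?(x) = (2 - ?(T x)) / 2 ^ a₁`, where `T` is
the Gauss map. Running this along the Euclidean algorithm, a rational `x ∈ (0,1)` has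
`?(x) = M / 2 ^ S` with `M` odd, while `den x < (a₁ + 1) · den (T x)` and `a + 1 ≤ 2 ^ a` give
`den x ≤ 2 ^ S`, with equality only for `x = 1/2`. A fixed point is `M / 2 ^ S` in lowest terms,
so its denominator is exactly `2 ^ S`.
-/

noncomputable def minkowskiTerm (x : ℝ) (k : ℕ) : ℝ :=
  if ∀ i ≤ k, 0 < cfDigit x i then
    (-1 : ℝ) ^ k / (2 : ℝ) ^ ((∑ i ∈ Finset.range (k + 1), cfDigit x i) - 1)
  else 0

lemma minkowskiQ_eq_tsum (x : ℝ) : minkowskiQ x = ∑' k, minkowskiTerm x k := rfl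

lemma abs_minkowskiTerm_le (x : ℝ) (k : ℕ) : |minkowskiTerm x k| ≤ (1 / 2) ^ k := by
  unfold minkowskiTerm
  split_ifs with hpos
  · have hsum : (k : ℤ) + 1 ≤ ∑ i ∈ Finset.range (k + 1), cfDigit x i := by
      simpa using Finset.card_nsmul_le_sum (Finset.range (k + 1)) (cfDigit x) 1
        fun i hi => hpos i (Nat.lt_succ_iff.mp (Finset.mem_range.mp hi))
    rw [abs_div, abs_pow, abs_neg, abs_one, one_pow, abs_of_pos (by positivity), one_div_pow,
      ← zpow_natCast]
    gcongr
    · norm_num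
    · linarith
  · simp

lemma summable_minkowskiTerm (x : ℝ) : Summable (minkowskiTerm x) :=
  summable_geometric_two.of_norm_bounded (abs_minkowskiTerm_le x)

lemma cfDigit_succ (x : ℝ) (i : ℕ) : cfDigit x (i + 1) = cfDigit (gaussMap x) i := by
  rw [cfDigit, cfDigit, Function.iterate_succ_apply]

lemma minkowskiTerm_zero {x : ℝ} (hx : 0 < cfDigit x 0) :
    minkowskiTerm x 0 = 2 / 2 ^ cfDigit x 0 := by
  rw [minkowskiTerm, if_pos (by simpa using hx)]
  simp [zpow_sub₀, div_div_eq_mul_div]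

lemma minkowskiTerm_succ {x : ℝ} (hx : 0 < cfDigit x 0) (k : ℕ) :
    minkowskiTerm x (k + 1) = -minkowskiTerm (gaussMap x) k / 2 ^ cfDigit x 0 := by
  have hpos : (∀ i ≤ k + 1, 0 < cfDigit x i) ↔ ∀ i ≤ k, 0 < cfDigit (gaussMap x) i := by
    simp only [← cfDigit_succ]
    refine ⟨fun h i hi => h (i + 1) (by omega), fun h i hi => ?_⟩
    cases i with
    | zero => exact hx
    | succ i => exact h i (by omega)
  unfold minkowskiTerm
  rw [Finset.sum_range_succ', ← if_congr hpos rfl rfl]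
  simp only [← cfDigit_succ]
  split_ifs
  · rw [add_sub_right_comm, zpow_add₀ two_ne_zero, pow_succ]
    field_simp
  · simp

theorem minkowskiQ_eq_of_cfDigit_pos {x : ℝ} (hx : 0 < cfDigit x 0) :
    minkowskiQ x = (2 - minkowskiQ (gaussMap x)) / 2 ^ cfDigit x 0 := by
  rw [minkowskiQ_eq_tsum, (summable_minkowskiTerm x).tsum_eq_zero_add, minkowskiTerm_zero hx]
  simp only [minkowskiTerm_succ hx, tsum_div_const, tsum_neg, minkowskiQ_eq_tsum]
  ring

lemma minkowskiQ_zero : minkowskiQ 0 = 0 := by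
  have hterm (k : ℕ) : minkowskiTerm 0 k = 0 :=
    if_neg fun h => by simpa [cfDigit] using h 0 k.zero_le
  simp [minkowskiQ_eq_tsum, hterm]

lemma gaussMap_ratCast (x : ℚ) : gaussMap x = (Int.fract x⁻¹ : ℚ) := by
  rw [gaussMap, Rat.cast_fract, Rat.cast_inv]

lemma cfDigit_ratCast_zero (x : ℚ) : cfDigit x 0 = ⌊x⁻¹⌋ := by
  rw [cfDigit, Function.iterate_zero_apply, ← Rat.cast_inv, Rat.floor_cast]

theorem minkowskiQ_ratCast_eq {x : ℚ} (h0 : 0 < x) (h1 : x ≤ 1) :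
    minkowskiQ x = (2 - minkowskiQ (Int.fract x⁻¹ : ℚ)) / 2 ^ ⌊x⁻¹⌋₊ := by
  have hfloor : cfDigit x 0 = ⌊x⁻¹⌋₊ := by
    rw [cfDigit_ratCast_zero, Int.natCast_floor_eq_floor (by positivity)]
  have hpos : 0 < cfDigit x 0 := by
    rw [cfDigit_ratCast_zero, Int.floor_pos]
    exact one_le_inv₀ h0 |>.mpr h1
  rw [minkowskiQ_eq_of_cfDigit_pos hpos, gaussMap_ratCast, hfloor, zpow_natCast]

lemma Rat.den_lt_floor_inv_add_one_mul {x : ℚ} (hx : 0 < x) :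
    x.den < (⌊x⁻¹⌋₊ + 1) * (Int.fract x⁻¹).den := by
  have hnum : (x.den : ℚ) = x⁻¹ * x⁻¹.den := by
    rw [Rat.mul_den_eq_num, Rat.num_inv, Int.sign_eq_one_of_pos (Rat.num_pos.mpr hx)]
    simp
  rw [Rat.den_intFract, ← Nat.cast_lt (α := ℚ), hnum]
  push_cast
  gcongr
  exact Nat.lt_floor_add_one _

lemma Rat.den_intCast_div_two_pow {M : ℤ} (hM : Odd M) (S : ℕ) :
    ((M : ℚ) / 2 ^ S).den = 2 ^ S := by
  have hcop : M.natAbs.Coprime ((2 : ℤ) ^ S).natAbs := by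
    rw [Int.natAbs_pow]
    exact (Nat.coprime_two_right.mpr (Int.natAbs_odd.mpr hM)).pow_right S
  exact_mod_cast Rat.den_div_eq_of_coprime (by positivity) hcop

lemma Nat.floor_add_fract {R : Type*} [Ring R] [LinearOrder R] [FloorRing R] {a : R}
    (ha : 0 ≤ a) : (⌊a⌋₊ : R) + Int.fract a = a := by
  rw [← Int.cast_natCast, Int.natCast_floor_eq_floor ha, Int.floor_add_fract]

lemma Nat.succ_lt_two_pow {n : ℕ} (hn : 2 ≤ n) : n + 1 < 2 ^ n := by
  induction n, hn using Nat.le_induction with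
  | base => norm_num
  | succ n _ ih => rw [pow_succ]; omega

theorem exists_minkowskiQ_eq_odd_div_two_pow (x : ℚ) (h0 : 0 < x) (h1 : x < 1) :
    ∃ (M : ℤ) (S : ℕ), Odd M ∧ minkowskiQ x = M / 2 ^ S ∧
      x.den ≤ 2 ^ S ∧ (x.den = 2 ^ S → x = 1 / 2) := by
  have hrec := minkowskiQ_ratCast_eq h0 h1.le
  have hden := Rat.den_lt_floor_inv_add_one_mul h0
  have hsplit := Nat.floor_add_fract (inv_nonneg.mpr h0.le)
  have ha : 1 ≤ ⌊x⁻¹⌋₊ := Nat.le_floor (by simpa using (one_le_inv₀ h0).mpr h1.le)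
  rcases (Int.fract_nonneg x⁻¹).eq_or_lt with hy | hy
  · obtain ⟨b, hb⟩ : ∃ b, ⌊x⁻¹⌋₊ = b + 1 := ⟨_, (Nat.sub_add_cancel ha).symm⟩
    rw [← hy, add_zero, hb] at hsplit
    have hb1 : 1 ≤ b := by
      by_contra! hb0
      rw [Nat.lt_one_iff.mp hb0, zero_add, Nat.cast_one, eq_comm, inv_eq_one] at hsplit
      exact h1.ne hsplit
    rw [← hy, Rat.den_zero, mul_one, hb] at hden
    refine ⟨1, b, odd_one, ?_, ?_, fun hx => ?_⟩
    · rw [hrec, ← hy, Rat.cast_zero, minkowskiQ_zero, hb, pow_succ]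
      field_simp
      norm_num
    · have := b.lt_two_pow_self
      omega
    · obtain rfl | hb2 := hb1.eq_or_lt
      · rw [← inv_inj, ← hsplit]
        norm_num
      · have := Nat.succ_lt_two_pow hb2
        omega
  · obtain ⟨M, S, hM, hy_eq, hy_den, -⟩ :=
      exists_minkowskiQ_eq_odd_div_two_pow (Int.fract x⁻¹) hy (Int.fract_lt_one _)
    have hlt : x.den < 2 ^ (S + ⌊x⁻¹⌋₊) := by
      calc x.den < (⌊x⁻¹⌋₊ + 1) * (Int.fract x⁻¹).den := hden
        _ ≤ 2 ^ ⌊x⁻¹⌋₊ * 2 ^ S := Nat.mul_le_mul Nat.lt_two_pow_self hy_den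
        _ = 2 ^ (S + ⌊x⁻¹⌋₊) := by rw [pow_add, mul_comm]
    refine ⟨2 ^ (S + 1) - M, S + ⌊x⁻¹⌋₊, (even_two.pow_of_ne_zero S.succ_ne_zero).sub_odd hM,
      ?_, hlt.le, fun h => absurd h hlt.ne⟩
    rw [hrec, hy_eq]
    push_cast
    field_simp
    ring
termination_by x.num.natAbs
decreasing_by
  have := Rat.fract_inv_num_lt_num_of_pos h0
  have := Rat.num_nonneg.mpr hy.le
  omega

lemma minkowskiQ_inv_natCast {n : ℕ} (hn : 1 ≤ n) : minkowskiQ ((n⁻¹ : ℚ) : ℝ) = 2 / 2 ^ n := by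
  rw [minkowskiQ_ratCast_eq (by positivity) (inv_le_one_of_one_le₀ (by exact_mod_cast hn)),
    inv_inv, Int.fract_natCast, Rat.cast_zero, minkowskiQ_zero, Nat.floor_natCast, sub_zero]

theorem rational_fixed_points :
    ∀ x : ℚ, (x : ℝ) ∈ Set.Icc (0 : ℝ) 1 →
      (minkowskiQ (x : ℝ) = (x : ℝ) ↔ x = 0 ∨ x = 1 / 2 ∨ x = 1) := by
  rintro x ⟨hx0, hx1⟩
  constructor
  · intro hfix
    obtain rfl | h0 := (Rat.cast_nonneg.mp hx0).eq_or_lt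
    · exact Or.inl rfl
    obtain rfl | h1 := (show x ≤ 1 by exact_mod_cast hx1).eq_or_lt
    · exact Or.inr (Or.inr rfl)
    obtain ⟨M, S, hM, hQ, -, hhalf⟩ := exists_minkowskiQ_eq_odd_div_two_pow x h0 h1
    have hx : x = M / 2 ^ S := by exact_mod_cast hfix.symm.trans hQ
    exact Or.inr (Or.inl (hhalf (hx ▸ Rat.den_intCast_div_two_pow hM S)))
  · rintro (rfl | rfl | rfl)
    · simpa using minkowskiQ_zero
    · have h := minkowskiQ_inv_natCast (show 1 ≤ 2 by norm_num)
      push_cast at h ⊢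
      rw [one_div, h]
      norm_num
    · simpa using minkowskiQ_inv_natCast (n := 1) le_rfl
end

section
/- The Minkowski question mark function has no fixed point in the open interval (4/9, 1/2). -/
open scoped Classical

private lemma aux_two_pow_nat : ∀ n : ℕ, 4 ≤ n → (2 * n + 3 : ℝ) ≤ 2 ^ n := by
  intro n hn
  induction n, hn using Nat.le_induction with
  | base => norm_num
  | succ k hk ih =>
    have h2 : (1:ℝ) ≤ 2 ^ k := one_le_pow₀ (by norm_num)
    rw [pow_succ]
    push_cast at ih ⊢
    nlinarith

private lemma aux_two_zpow (m : ℤ) (hm : 4 ≤ m) : (2 * m + 3 : ℝ) ≤ (2:ℝ) ^ m := by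
  lift m to ℕ using (by omega)
  rw [zpow_natCast]
  have h4 : (4:ℕ) ≤ m := by exact_mod_cast hm
  have := aux_two_pow_nat m h4
  push_cast at *
  linarith

private lemma minkowski_lower (x : ℝ) (h0 : cfDigit x 0 = 2) (h1 : 4 ≤ cfDigit x 1) :
    1 / 2 - (2:ℝ) ^ (-(cfDigit x 1 + 1)) ≤ minkowskiQ x := by
  set S : ℕ → ℤ := fun k => ∑ i ∈ Finset.range (k + 1), cfDigit x i with hS
  set f : ℕ → ℝ := fun k =>
    if ∀ i ≤ k, 0 < cfDigit x i then (-1 : ℝ) ^ k / (2 : ℝ) ^ (S k - 1) else 0 with hf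
  have hQ : minkowskiQ x = ∑' k, f k := rfl
  have htwo : (2:ℝ) ≠ 0 := two_ne_zero
  -- sum of digits lower bound
  have hSk : ∀ k : ℕ, (∀ i ≤ k, 0 < cfDigit x i) → (k : ℤ) + 1 ≤ S k := by
    intro k hk
    have : ∑ i ∈ Finset.range (k + 1), (1 : ℤ) ≤ ∑ i ∈ Finset.range (k + 1), cfDigit x i :=
      Finset.sum_le_sum fun i hi => hk i (Finset.mem_range_succ_iff.mp hi)
    simpa using this
  -- abs bound
  have habs : ∀ k : ℕ, |f k| ≤ (1/2 : ℝ) ^ k := by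
    intro k
    simp only [hf]
    by_cases hc : ∀ i ≤ k, 0 < cfDigit x i
    · rw [if_pos hc]
      have hSk' := hSk k hc
      have h2 : (0:ℝ) < (2:ℝ) ^ (S k - 1) := zpow_pos (by norm_num) _
      have hpow : (1/2:ℝ) ^ k = (2:ℝ) ^ (-(k:ℤ)) := by
        rw [zpow_neg, zpow_natCast, one_div, inv_pow]
      rw [abs_div, abs_pow, abs_neg, abs_one, one_pow, abs_of_pos h2, div_le_iff₀ h2,
        hpow, ← zpow_add₀ htwo]
      calc (1:ℝ) = (2:ℝ) ^ (0:ℤ) := by norm_num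
        _ ≤ (2:ℝ) ^ (-(k:ℤ) + (S k - 1)) := zpow_le_zpow_right₀ (by norm_num) (by omega)
    · rw [if_neg hc]
      simp
  -- summability
  have hgeo : Summable (fun k : ℕ => (1/2 : ℝ) ^ k) :=
    summable_geometric_of_lt_one (by norm_num) (by norm_num)
  have hsum : Summable f := by
    refine Summable.of_norm_bounded hgeo fun k => ?_
    rw [Real.norm_eq_abs]; exact habs k
  have hse : Summable (fun k : ℕ => f (2 * k)) :=
    hsum.comp_injective fun p q h => by omega
  have hso : Summable (fun k : ℕ => f (2 * k + 1)) :=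
    hsum.comp_injective fun p q h => by omega
  -- pair the terms
  have hpair : ∑' k, f k = ∑' k : ℕ, (f (2 * k) + f (2 * k + 1)) := by
    rw [← tsum_even_add_odd hse hso]
    exact (Summable.tsum_add hse hso).symm
  -- term 0
  have hcond1 : ∀ i ≤ 1, 0 < cfDigit x i := by
    intro i hi
    interval_cases i <;> omega
  have hcond0 : ∀ i ≤ 0, 0 < cfDigit x i := fun i hi => hcond1 i (le_trans hi (by norm_num))
  have hS0 : S 0 = 2 := by
    simp only [hS]
    rw [Finset.sum_range_one, h0]
  have hS1 : S 1 = cfDigit x 1 + 2 := by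
    simp only [hS]
    rw [Finset.sum_range_succ, Finset.sum_range_one, h0]
    ring
  have hF0 : f 0 + f 1 = 1 / 2 - (2:ℝ) ^ (-(cfDigit x 1 + 1)) := by
    simp only [hf]
    rw [if_pos hcond0, if_pos hcond1, hS0, hS1,
      show (cfDigit x 1 + 2 - 1 : ℤ) = cfDigit x 1 + 1 by ring, zpow_neg]
    norm_num
    rw [one_div, sub_eq_add_neg, neg_div, one_div]
  -- nonnegativity of pairs for k ≥ 1
  have hFpos : ∀ k : ℕ, k ≠ 0 → 0 ≤ f (2 * k) + f (2 * k + 1) := by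
    intro k _
    simp only [hf]
    by_cases hc : ∀ i ≤ 2 * k + 1, 0 < cfDigit x i
    · have hc' : ∀ i ≤ 2 * k, 0 < cfDigit x i := fun i hi => hc i (by omega)
      rw [if_pos hc, if_pos hc']
      have heven : ((-1:ℝ)) ^ (2 * k) = 1 := by
        rw [pow_mul]; norm_num
      have hodd : ((-1:ℝ)) ^ (2 * k + 1) = -1 := by
        rw [pow_succ, heven]; norm_num
      rw [heven, hodd]
      have hstep : S (2 * k) + 1 ≤ S (2 * k + 1) := by
        have he : S (2 * k + 1) = S (2 * k) + cfDigit x (2 * k + 1) := by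
          simp only [hS]
          rw [Finset.sum_range_succ]
        have := hc (2 * k + 1) le_rfl
        omega
      have hle : (2:ℝ) ^ (S (2 * k) - 1) ≤ (2:ℝ) ^ (S (2 * k + 1) - 1) :=
        zpow_le_zpow_right₀ (by norm_num) (by omega)
      have h2 : (0:ℝ) < (2:ℝ) ^ (S (2 * k) - 1) := zpow_pos (by norm_num) _
      have h3 : (0:ℝ) < (2:ℝ) ^ (S (2 * k + 1) - 1) := zpow_pos (by norm_num) _
      have := one_div_le_one_div_of_le h2 hle
      rw [one_div, one_div] at this
      have e1 : (1:ℝ) / 2 ^ (S (2*k) - 1) = (2 ^ (S (2*k) - 1) : ℝ)⁻¹ := one_div _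
      rw [div_eq_mul_inv, div_eq_mul_inv, one_mul, neg_one_mul]
      linarith
    · rw [if_neg hc]
      by_cases hc' : ∀ i ≤ 2 * k, 0 < cfDigit x i
      · rw [if_pos hc']
        have heven : ((-1:ℝ)) ^ (2 * k) = 1 := by rw [pow_mul]; norm_num
        rw [heven]
        have h2 : (0:ℝ) < (2:ℝ) ^ (S (2 * k) - 1) := zpow_pos (by norm_num) _
        positivity
      · rw [if_neg hc']; norm_num
  -- conclude
  have hFsum : Summable (fun k : ℕ => f (2 * k) + f (2 * k + 1)) := hse.add hso
  have hle0 := Summable.le_tsum hFsum 0 fun j hj => hFpos j hj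
  rw [hQ, hpair]
  calc 1 / 2 - (2:ℝ) ^ (-(cfDigit x 1 + 1)) = f (2 * 0) + f (2 * 0 + 1) := by
        rw [show 2 * 0 = 0 by norm_num, show 2 * 0 + 1 = 1 by norm_num, hF0]
    _ ≤ _ := hle0

theorem no_fixed_point_in_Ioo_fourNinths_half :
    ∀ x ∈ Set.Ioo (4 / 9 : ℝ) (1 / 2), minkowskiQ x ≠ x := by
  rintro x ⟨hx1, hx2⟩
  have hx0 : (0:ℝ) < x := by linarith
  have hinv2 : (2:ℝ) < x⁻¹ := by
    rw [lt_inv_comm₀ (by norm_num) hx0]; linarith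
  have hinv9 : x⁻¹ < 9 / 4 := by
    rw [inv_lt_comm₀ hx0 (by norm_num)]; linarith
  have h0 : cfDigit x 0 = 2 := by
    rw [cfDigit, Function.iterate_zero, id]
    rw [Int.floor_eq_iff]
    constructor <;> push_cast <;> linarith
  have hgx : gaussMap x = x⁻¹ - 2 := by
    rw [gaussMap, Int.fract]
    have : ⌊x⁻¹⌋ = 2 := by rw [← h0, cfDigit, Function.iterate_zero, id]
    rw [this]; push_cast; ring
  have hg0 : 0 < gaussMap x := by rw [hgx]; linarith
  have hg4 : gaussMap x < 1 / 4 := by rw [hgx]; linarith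
  have hginv : (4:ℝ) < (gaussMap x)⁻¹ := by
    rw [lt_inv_comm₀ (by norm_num) hg0]; linarith
  have h1def : cfDigit x 1 = ⌊(gaussMap x)⁻¹⌋ := by
    rw [cfDigit, Function.iterate_one]
  have h1 : 4 ≤ cfDigit x 1 := by
    rw [h1def]
    exact Int.le_floor.mpr (by exact_mod_cast hginv.le)
  set m := cfDigit x 1 with hm
  have hfloor_lt : (gaussMap x)⁻¹ < (m:ℝ) + 1 := by
    rw [h1def]; push_cast; exact Int.lt_floor_add_one _
  have hmR : (4:ℝ) ≤ (m:ℝ) := by exact_mod_cast h1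
  have hm1 : (0:ℝ) < (m:ℝ) + 1 := by linarith
  have hlt : ((m:ℝ)+1)⁻¹ < x⁻¹ - 2 := by
    rw [← hgx]
    exact (inv_lt_comm₀ hm1 hg0).mpr hfloor_lt
  have hxlt : x * (2 * (m:ℝ) + 3) < (m:ℝ) + 1 := by
    have h2 : x * ((m:ℝ)+1)⁻¹ < x * (x⁻¹ - 2) := mul_lt_mul_of_pos_left hlt hx0
    rw [mul_sub, mul_inv_cancel₀ hx0.ne'] at h2
    have h4 := mul_lt_mul_of_pos_right h2 hm1
    rw [mul_assoc, inv_mul_cancel₀ hm1.ne', mul_one] at h4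
    nlinarith
  have hkey := minkowski_lower x h0 h1
  have hzp : (2:ℝ) ^ (-(m + 1)) ≤ 1 / (2 * (2 * (m:ℝ) + 3)) := by
    have hpow := aux_two_zpow m h1
    have hzpos : (0:ℝ) < (2:ℝ) ^ m := zpow_pos (by norm_num) _
    rw [zpow_neg, zpow_add₀ two_ne_zero m 1, zpow_one, one_div]
    apply inv_anti₀ (by linarith)
    linarith
  intro heq
  rw [heq] at hkey
  have hprod : (1 / (2 * (2 * (m:ℝ) + 3))) * (2 * (2 * (m:ℝ) + 3)) = 1 := by
    rw [one_div]
    exact inv_mul_cancel₀ (by linarith)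
  nlinarith [hkey, hzp, hxlt, hprod, hmR]
end
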